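/- arXiv:2409.12523 — 9 statements merged into one kernel-verified Lean document; each statement's English description precedes it below -/
import Mathlib

section
/- For all x ≥ 0 one has c·W_q(x) − Z_q(x) = (λ/(c(Φ_q − ρ₋)))(e^{Φ_q x} − e^{ρ₋ x}), and this quantity is nonnegative. -/
set_option maxHeartbeats 1000000

open Real intervalIntegral

lemma int_exp_aux (r x : ℝ) (hr : r ≠ 0) :
    ∫ y in (0:ℝ)..x, Real.exp (r*y) = (Real.exp (r*x) - 1)/r := by
  rw [intervalIntegral.integral_comp_mul_left (fun y => Real.exp y) hr]
  rw [mul_zero, integral_exp, Real.exp_zero, smul_eq_mul]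
  ring

theorem stmt4 (c α lam q μ : ℝ)
    (hc : 0 < c) (hα0 : 0 < α) (hα1 : α ≤ 1)
    (hlam : 0 < lam) (hq : 0 < q) (hμ : 0 < μ)
    (Δ Φ ρ : ℝ)
    (hΔ : Δ = (c*μ - α*lam - α*q)^2 + 4*α*c*μ*q)
    (hΦ : Φ = (-(c*μ - α*lam - α*q) + Real.sqrt Δ) / (2*α*c))
    (hρ : ρ = (-(c*μ - α*lam - α*q) - Real.sqrt Δ) / (2*α*c))
    (W Z : ℝ → ℝ)
    (hW : ∀ x, W x = ((α*Φ + μ)*Real.exp (Φ*x) - (α*ρ + μ)*Real.exp (ρ*x))/(α*c*(Φ - ρ)))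
    (hZ : ∀ x, Z x = 1 + q * ∫ y in (0:ℝ)..x, W y) :
    ∀ x : ℝ, 0 ≤ x →
      c * W x - Z x = lam/(c*(Φ - ρ)) * (Real.exp (Φ*x) - Real.exp (ρ*x)) ∧
      0 ≤ c * W x - Z x := by
  have hΔpos : 0 < Δ := by
    rw [hΔ]; positivity
  have hD2 : Real.sqrt Δ ^ 2 = Δ := Real.sq_sqrt hΔpos.le
  have hDpos : 0 < Real.sqrt Δ := Real.sqrt_pos.mpr hΔpos
  set s := c*μ - α*lam - α*q with hs
  set D := Real.sqrt Δ with hDdef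
  have hΔs : D^2 = s^2 + 4*α*c*μ*q := by rw [hD2, hΔ]
  have hαc : 0 < α*c := mul_pos hα0 hc
  have hsq : s^2 < D^2 := by nlinarith [mul_pos hαc (mul_pos hμ hq)]
  have hs1 : -D < s := by nlinarith [hDpos, hsq]
  have hs2 : s < D := by nlinarith [hDpos, hsq]
  have hΦpos : 0 < Φ := by
    rw [hΦ]; apply div_pos (by linarith) (by linarith)
  have hρneg : ρ < 0 := by
    rw [hρ]; apply div_neg_of_neg_of_pos (by linarith) (by linarith)
  have hΦρ : ρ < Φ := lt_trans hρneg hΦpos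
  have hd : Φ - ρ ≠ 0 := by linarith [hΦρ]
  have hsum : α*c*(Φ + ρ) = -s := by
    rw [hΦ, hρ]; field_simp; ring
  have hpr : Φ*ρ = -(μ*q)/(α*c) := by
    rw [hΦ, hρ, div_mul_div_comm,
      show ((-s + D) * (-s - D)) = s^2 - D^2 by ring, hΔs]
    field_simp; ring
  have hprod : α*c*(Φ*ρ) + μ*q = 0 := by
    rw [hpr]; field_simp; ring
  have hq1 : α*c*Φ^2 + s*Φ - μ*q = 0 := by nlinarith [hsum, hprod]
  have hq2 : α*c*ρ^2 + s*ρ - μ*q = 0 := by nlinarith [hsum, hprod]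
  intro x hx
  have hI : ∫ y in (0:ℝ)..x, W y =
      ((α*Φ + μ)*((Real.exp (Φ*x) - 1)/Φ) - (α*ρ + μ)*((Real.exp (ρ*x) - 1)/ρ))/(α*c*(Φ - ρ)) := by
    simp only [hW]
    rw [intervalIntegral.integral_div]
    have hint : ∀ r : ℝ, IntervalIntegrable (fun y => (α*r + μ) * Real.exp (r*y)) MeasureTheory.volume 0 x := by
      intro r
      exact (Continuous.intervalIntegrable (by continuity)) 0 x
    rw [intervalIntegral.integral_sub (hint Φ) (hint ρ)]
    rw [intervalIntegral.integral_const_mul, intervalIntegral.integral_const_mul,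
      int_exp_aux Φ x hΦpos.ne', int_exp_aux ρ x hρneg.ne]
  have key : c * W x - Z x = lam/(c*(Φ - ρ)) * (Real.exp (Φ*x) - Real.exp (ρ*x)) := by
    rw [hW, hZ, hI]
    have h1 : Φ ≠ 0 := hΦpos.ne'
    have h2 : ρ ≠ 0 := hρneg.ne
    have h3 : α ≠ 0 := hα0.ne'
    have h4 : c ≠ 0 := hc.ne'
    rw [hs] at hq1 hq2
    have e1 : (α*Φ + μ)/Φ = (α*c*Φ + c*μ - α*lam)/q := by
      rw [div_eq_div_iff h1 hq.ne']
      linear_combination -hq1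
    have e2 : (α*ρ + μ)/ρ = (α*c*ρ + c*μ - α*lam)/q := by
      rw [div_eq_div_iff h2 hq.ne']
      linear_combination -hq2
    rw [show (α*Φ + μ)*((Real.exp (Φ*x) - 1)/Φ) = ((α*Φ + μ)/Φ)*(Real.exp (Φ*x) - 1) by ring,
        show (α*ρ + μ)*((Real.exp (ρ*x) - 1)/ρ) = ((α*ρ + μ)/ρ)*(Real.exp (ρ*x) - 1) by ring,
        e1, e2]
    field_simp
    ring
  refine ⟨key, ?_⟩
  rw [key]
  have : Real.exp (ρ*x) ≤ Real.exp (Φ*x) := by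
    apply Real.exp_le_exp.mpr
    nlinarith [hΦρ]
  have hpos : 0 < lam/(c*(Φ-ρ)) := by
    apply div_pos hlam
    apply mul_pos hc; linarith
  nlinarith [hpos, this]
end

section
/- For every b ≥ 0, the scale function W_q satisfies the integro-differential equation c·W_q'(b) + λ∫₀^b W_q(y)·(μ/α)·e^{−(μ/α)(b−y)} dy − (λ + q)·W_q(b) = 0. -/
/-!
Each exponential mode `x ↦ (α r + μ) e^{r x}` is mapped by the operator of the equation to
`P(r) e^{r b} - λ μ e^{-(μ/α) b}`, where `P(r) = α c r² + (c μ - α λ - α q) r - μ q`. The error term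
does not depend on `r`, so it cancels in the difference of the modes at the two roots `Φ_q`, `ρ₋`
of `P`, and `W_q` is exactly such a difference.
-/

open Real

/-- The generator, minus `q`, of the surplus process with drift `c`, claim intensity `lam` and
`Exp(θ)`-distributed claims, killed at ruin. Under retention `α` the retained claims are `Exp(μ/α)`. -/
noncomputable def discountedGenerator (c lam q θ : ℝ) (f : ℝ → ℝ) (b : ℝ) : ℝ :=
  c * deriv f b + lam * (∫ y in (0:ℝ)..b, f y * θ * exp (-θ * (b - y))) - (lam + q) * f b

lemma discountedGenerator_sub_div (c lam q θ d : ℝ) {f g : ℝ → ℝ}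
    (hf : Differentiable ℝ f) (hg : Differentiable ℝ g) (b : ℝ) :
    discountedGenerator c lam q θ (fun x => (f x - g x) / d) b
      = (discountedGenerator c lam q θ f b - discountedGenerator c lam q θ g b) / d := by
  have hint : ∀ h : ℝ → ℝ, Continuous h →
      IntervalIntegrable (fun y => h y * θ * exp (-θ * (b - y))) MeasureTheory.volume 0 b :=
    fun h hh =>
      (by fun_prop : Continuous fun y => h y * θ * exp (-θ * (b - y))).intervalIntegrable 0 b
  have hderiv : deriv (fun x => (f x - g x) / d) b = (deriv f b - deriv g b) / d :=
    (((hf b).hasDerivAt.sub (hg b).hasDerivAt).div_const d).deriv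
  have hconv : (∫ y in (0:ℝ)..b, (f y - g y) / d * θ * exp (-θ * (b - y)))
      = ((∫ y in (0:ℝ)..b, f y * θ * exp (-θ * (b - y)))
          - ∫ y in (0:ℝ)..b, g y * θ * exp (-θ * (b - y))) / d := by
    rw [← intervalIntegral.integral_sub (hint f hf.continuous) (hint g hg.continuous),
      ← intervalIntegral.integral_div]
    congr 1
    ext y
    ring
  simp only [discountedGenerator, hderiv, hconv]
  ring

section ExponentialMode

variable {α μ θ : ℝ} (hθ : α * θ = μ)
include hθ

lemma integral_exp_mode_mul_exp_kernel (r b : ℝ) :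
    ∫ y in (0:ℝ)..b, (α * r + μ) * exp (r * y) * θ * exp (-θ * (b - y))
      = μ * (exp (r * b) - exp (-θ * b)) := by
  have hF : ∀ y ∈ Set.uIcc (0:ℝ) b, HasDerivAt (fun y => μ * exp (r * y - θ * (b - y)))
      ((α * r + μ) * exp (r * y) * θ * exp (-θ * (b - y))) y := by
    intro y _
    have hexponent : HasDerivAt (fun y => r * y - θ * (b - y)) (r + θ) y :=
      (((hasDerivAt_id' y).const_mul r).sub
        (((hasDerivAt_id' y).const_sub b).const_mul θ)).congr_deriv (by ring)
    refine (hexponent.exp.const_mul μ).congr_deriv ?_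
    rw [← hθ, sub_eq_add_neg (r * y), exp_add, neg_mul]
    ring
  rw [intervalIntegral.integral_eq_sub_of_hasDerivAt hF
    ((by fun_prop : Continuous fun y => (α * r + μ) * exp (r * y) * θ * exp (-θ * (b - y)))
      |>.intervalIntegrable 0 b)]
  simp only [sub_self, mul_zero, sub_zero, zero_sub, neg_mul]
  ring

lemma discountedGenerator_exp_mode (c lam q r b : ℝ) :
    discountedGenerator c lam q θ (fun x => (α * r + μ) * exp (r * x)) b
      = (α * c * (r * r) + (c * μ - α * lam - α * q) * r - μ * q) * exp (r * b)
        - lam * μ * exp (-θ * b) := by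
  have hderiv : deriv (fun x => (α * r + μ) * exp (r * x)) b = (α * r + μ) * (r * exp (r * b)) := by
    simpa [mul_comm] using (((hasDerivAt_id b).const_mul r).exp.const_mul (α * r + μ)).deriv
  rw [discountedGenerator, hderiv, integral_exp_mode_mul_exp_kernel hθ]
  ring

end ExponentialMode

theorem stmt5_general (c α lam q μ : ℝ)
    (hc : 0 < c) (hα0 : 0 < α) (hq : 0 < q) (hμ : 0 < μ)
    (Δ Φ ρ : ℝ)
    (hΔ : Δ = (c*μ - α*lam - α*q)^2 + 4*α*c*μ*q)
    (hΦ : Φ = (-(c*μ - α*lam - α*q) + Real.sqrt Δ) / (2*α*c))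
    (hρ : ρ = (-(c*μ - α*lam - α*q) - Real.sqrt Δ) / (2*α*c))
    (W : ℝ → ℝ)
    (hW : ∀ x, W x = ((α*Φ + μ)*Real.exp (Φ*x) - (α*ρ + μ)*Real.exp (ρ*x))/(α*c*(Φ - ρ))) :
    ∀ b : ℝ, 0 ≤ b →
      c * deriv W b
        + lam * (∫ y in (0:ℝ)..b, W y * (μ/α) * Real.exp (-(μ/α)*(b - y)))
        - (lam + q) * W b = 0 := by
  intro b _
  have hθ : α * (μ / α) = μ := mul_div_cancel₀ μ hα0.ne'
  have hdiscrim : discrim (α * c) (c*μ - α*lam - α*q) (-(μ * q)) = √Δ * √Δ := by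
    rw [mul_self_sqrt (by rw [hΔ]; positivity), hΔ, discrim]
    ring
  have hroot := quadratic_eq_zero_iff (by positivity) hdiscrim
  have hΦroot := (hroot Φ).2 (.inl (by rw [hΦ, mul_assoc]))
  have hρroot := (hroot ρ).2 (.inr (by rw [hρ, mul_assoc]))
  have hmode : ∀ r, Differentiable ℝ fun x => (α * r + μ) * exp (r * x) := fun r => by fun_prop
  change discountedGenerator c lam q (μ / α) W b = 0
  rw [show W = _ from funext hW, discountedGenerator_sub_div _ _ _ _ _ (hmode Φ) (hmode ρ),
    discountedGenerator_exp_mode hθ, discountedGenerator_exp_mode hθ]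
  linear_combination (exp (Φ * b) * hΦroot - exp (ρ * b) * hρroot) / (α * c * (Φ - ρ))

theorem stmt5 (c α lam q μ : ℝ)
    (hc : 0 < c) (hα0 : 0 < α) (hα1 : α ≤ 1)
    (hlam : 0 < lam) (hq : 0 < q) (hμ : 0 < μ)
    (Δ Φ ρ : ℝ)
    (hΔ : Δ = (c*μ - α*lam - α*q)^2 + 4*α*c*μ*q)
    (hΦ : Φ = (-(c*μ - α*lam - α*q) + Real.sqrt Δ) / (2*α*c))
    (hρ : ρ = (-(c*μ - α*lam - α*q) - Real.sqrt Δ) / (2*α*c))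
    (W : ℝ → ℝ)
    (hW : ∀ x, W x = ((α*Φ + μ)*Real.exp (Φ*x) - (α*ρ + μ)*Real.exp (ρ*x))/(α*c*(Φ - ρ))) :
    ∀ b : ℝ, 0 ≤ b →
      c * deriv W b
        + lam * (∫ y in (0:ℝ)..b, W y * (μ/α) * Real.exp (-(μ/α)*(b - y)))
        - (lam + q) * W b = 0 :=
  stmt5_general c α lam q μ hc hα0 hq hμ Δ Φ ρ hΔ hΦ hρ W hW
end

section
/- Extend W_q to all of ℝ by setting W_q(z) = 0 for z < 0. Then for every x ≥ 0, λ∫₀^∞ W_q(x − αy)·μ·e^{−μy} dy = λμ(e^{Φ_q x} − e^{ρ₋ x})/(αc(Φ_q − ρ₋)). -/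
/-!
On `[0, x/α]` the integrand is a combination of the exponentials `exp (θ (x - α y) - μ y)` with
`θ ∈ {Φ, ρ}`, each carrying the factor `αθ + μ`, which is exactly minus the derivative of its
exponent; beyond `x/α` it vanishes. So each term integrates to `exp (θ x) - exp (-μ x / α)`, and the
two boundary terms `exp (-μ x / α)` cancel in the difference.
-/

open MeasureTheory Real

theorem integral_mul_exp_mul_sub_sub_mul (α θ μ x b : ℝ) :
    ∫ y in (0 : ℝ)..b, (α * θ + μ) * exp (θ * (x - α * y) - μ * y)
      = exp (θ * x) - exp (θ * (x - α * b) - μ * b) := by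
  have hderiv : ∀ y, HasDerivAt (fun y => -exp (θ * (x - α * y) - μ * y))
      ((α * θ + μ) * exp (θ * (x - α * y) - μ * y)) y := fun y => by
    have hexponent : ∀ z, θ * (x - α * z) - μ * z = θ * x - (α * θ + μ) * z := fun z => by ring
    simp only [hexponent]
    refine ((((hasDerivAt_id' y).const_mul (α * θ + μ)).const_sub (θ * x)).exp.fun_neg).congr_deriv
      ?_
    ring
  rw [intervalIntegral.integral_eq_sub_of_hasDerivAt (fun y _ => hderiv y)
    (Continuous.intervalIntegrable (by fun_prop) _ _)]
  simp only [mul_zero, sub_zero]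
  ring

theorem setIntegral_Ioi_eq_intervalIntegral_of_eq_zero {f : ℝ → ℝ} {a b : ℝ} (hab : a ≤ b)
    (hf : ∀ y, b < y → f y = 0) :
    ∫ y in Set.Ioi a, f y = ∫ y in a..b, f y := by
  rw [intervalIntegral.integral_of_le hab,
    setIntegral_eq_of_subset_of_forall_sdiff_eq_zero measurableSet_Ioi Set.Ioc_subset_Ioi_self]
  rintro y ⟨hya, hyb⟩
  exact hf y (lt_of_not_ge fun h => hyb ⟨hya, h⟩)

theorem stmt7_general (c α lam μ : ℝ)
    (hα0 : 0 < α)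
    (Φ ρ : ℝ)
    (W : ℝ → ℝ)
    (hW : ∀ z, 0 ≤ z → W z = ((α*Φ + μ)*Real.exp (Φ*z) - (α*ρ + μ)*Real.exp (ρ*z))/(α*c*(Φ - ρ)))
    (hWneg : ∀ z, z < 0 → W z = 0) :
    ∀ x : ℝ, 0 ≤ x →
      lam * (∫ y in Set.Ioi (0:ℝ), W (x - α*y) * μ * Real.exp (-μ*y))
        = lam * μ * (Real.exp (Φ*x) - Real.exp (ρ*x))/(α*c*(Φ - ρ)) := by
  intro x hx
  have hvanish : ∀ y, x / α < y → W (x - α*y) * μ * exp (-μ*y) = 0 := fun y hy => by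
    rw [hWneg _ (by linarith [(div_lt_iff₀' hα0).mp hy]), zero_mul, zero_mul]
  have hformula : ∀ y ∈ Set.uIcc 0 (x / α), W (x - α*y) * μ * exp (-μ*y)
      = μ / (α*c*(Φ - ρ)) * ((α*Φ + μ) * exp (Φ * (x - α*y) - μ*y)
          - (α*ρ + μ) * exp (ρ * (x - α*y) - μ*y)) := fun y hy => by
    rw [Set.uIcc_of_le (by positivity)] at hy
    rw [hW _ (by linarith [(le_div_iff₀' hα0).mp hy.2])]
    simp only [sub_eq_add_neg _ (μ*y), exp_add, neg_mul]
    ring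
  rw [setIntegral_Ioi_eq_intervalIntegral_of_eq_zero (by positivity) hvanish,
    intervalIntegral.integral_congr hformula, intervalIntegral.integral_const_mul,
    intervalIntegral.integral_sub (Continuous.intervalIntegrable (by fun_prop) _ _)
      (Continuous.intervalIntegrable (by fun_prop) _ _),
    integral_mul_exp_mul_sub_sub_mul, integral_mul_exp_mul_sub_sub_mul,
    mul_div_cancel₀ x hα0.ne', sub_self, mul_zero, mul_zero]
  ring

theorem stmt7 (c α lam q μ : ℝ)
    (hc : 0 < c) (hα0 : 0 < α) (hα1 : α ≤ 1)
    (hlam : 0 < lam) (hq : 0 < q) (hμ : 0 < μ)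
    (Δ Φ ρ : ℝ)
    (hΔ : Δ = (c*μ - α*lam - α*q)^2 + 4*α*c*μ*q)
    (hΦ : Φ = (-(c*μ - α*lam - α*q) + Real.sqrt Δ) / (2*α*c))
    (hρ : ρ = (-(c*μ - α*lam - α*q) - Real.sqrt Δ) / (2*α*c))
    (W : ℝ → ℝ)
    (hW : ∀ z, 0 ≤ z → W z = ((α*Φ + μ)*Real.exp (Φ*z) - (α*ρ + μ)*Real.exp (ρ*z))/(α*c*(Φ - ρ)))
    (hWneg : ∀ z, z < 0 → W z = 0) :
    ∀ x : ℝ, 0 ≤ x →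
      lam * (∫ y in Set.Ioi (0:ℝ), W (x - α*y) * μ * Real.exp (-μ*y))
        = lam * μ * (Real.exp (Φ*x) - Real.exp (ρ*x))/(α*c*(Φ - ρ)) :=
  stmt7_general c α lam μ hα0 Φ ρ W hW hWneg
end

section
/- Let C_q(x) = c·W_q(x) − Z_q(x). Then for all a, b ≥ 0: (i) C_q'(b) = λ/(c·γ(b)); (ii) c·γ(b)·W_q(b) = 1 + μ_α·θ(b); (iii) e^{−μ_α a}·C_q'(b) + q·W_q(b) > 0 and (1 − k·m(a)·C_q'(b)) / (e^{−μ_α a}·C_q'(b) + q·W_q(b)) = (c·γ(b) − λk·m(a)) / (q + μ_α·q·θ(b) + λ·e^{−μ_α a}). -/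
/-!
`Φ_q` and `ρ₋` are the roots of the Lundberg equation `c r - λ r / (μ_α + r) = q`, i.e.
`(α r + μ) (c r - q) = α λ r`. By the fundamental theorem of calculus `C_q' = c W_q' - q W_q`,
and the Lundberg equation collapses this combination of `e^{Φ_q b}` and `e^{ρ₋ b}` to
`λ / (c γ(b))`. Identity (ii) is direct algebra; positivity in (iii) follows from (i), (ii) and
`γ(b) > 0`, and the quotient identity by multiplying numerator and denominator by `c γ(b)`.
-/

open Real

section Quadratic

variable {A B P : ℝ}

lemma quadratic_roots_sign (hA : 0 < A) (hP : 0 < P) :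
    0 < (-B + √(B ^ 2 + 4 * A * P)) / (2 * A) ∧ (-B - √(B ^ 2 + 4 * A * P)) / (2 * A) < 0 := by
  have hB : |B| < √(B ^ 2 + 4 * A * P) :=
    (Real.lt_sqrt (abs_nonneg B)).2 (by rw [sq_abs]; nlinarith [mul_pos hA hP])
  obtain ⟨h₁, h₂⟩ := abs_lt.1 hB
  constructor
  · exact div_pos (by linarith) (by positivity)
  · exact div_neg_of_neg_of_pos (by linarith) (by positivity)

lemma quadratic_eq_zero_of_root (hA : A ≠ 0) (hD : 0 ≤ B ^ 2 + 4 * A * P) {r : ℝ}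
    (hr : r = (-B + √(B ^ 2 + 4 * A * P)) / (2 * A) ∨ r = (-B - √(B ^ 2 + 4 * A * P)) / (2 * A)) :
    A * (r * r) + B * r - P = 0 := by
  have hdiscrim : discrim A B (-P) = √(B ^ 2 + 4 * A * P) * √(B ^ 2 + 4 * A * P) := by
    rw [Real.mul_self_sqrt hD, discrim]; ring
  simpa [sub_eq_add_neg] using (quadratic_eq_zero_iff hA hdiscrim r).2 hr

end Quadratic

lemma hasDerivAt_const_mul_sub_one_add_integral {W : ℝ → ℝ} {W' x : ℝ} (c q : ℝ)
    (hW : Continuous W) (hW' : HasDerivAt W W' x) :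
    HasDerivAt (fun x ↦ c * W x - (1 + q * ∫ y in (0 : ℝ)..x, W y)) (c * W' - q * W x) x :=
  (hW'.const_mul c).sub (((hW.integral_hasStrictDerivAt 0 x).hasDerivAt.const_mul q).const_add 1)

lemma hasDerivAt_exp_combination (u v Φ ρ K x : ℝ) :
    HasDerivAt (fun x ↦ (u * exp (Φ * x) - v * exp (ρ * x)) / K)
      ((u * (Φ * exp (Φ * x)) - v * (ρ * exp (ρ * x))) / K) x := by
  have hexp (r : ℝ) : HasDerivAt (fun x ↦ exp (r * x)) (r * exp (r * x)) x := by
    simpa [mul_comm] using ((hasDerivAt_id x).const_mul r).exp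
  exact (((hexp Φ).const_mul u).sub ((hexp ρ).const_mul v)).div_const K

section ScaleFunction

variable {α c lam q μ Φ ρ : ℝ}

lemma lundberg_roots (hα : 0 < α) (hc : 0 < c) (hq : 0 < q) (hμ : 0 < μ) {Δ : ℝ}
    (hΔ : Δ = (c*μ - α*lam - α*q)^2 + 4*α*c*μ*q)
    (hΦ : Φ = (-(c*μ - α*lam - α*q) + Real.sqrt Δ) / (2*α*c))
    (hρ : ρ = (-(c*μ - α*lam - α*q) - Real.sqrt Δ) / (2*α*c)) :
    0 < Φ ∧ ρ < 0 ∧ (α*Φ + μ) * (c*Φ - q) = α*lam*Φ ∧ (α*ρ + μ) * (c*ρ - q) = α*lam*ρ := by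
  have hΔ' : Δ = (c*μ - α*lam - α*q)^2 + 4*(α*c)*(μ*q) := by rw [hΔ]; ring
  rw [hΔ', mul_assoc 2] at hΦ hρ
  have hαc : 0 < α * c := mul_pos hα hc
  have hD : 0 ≤ (c*μ - α*lam - α*q)^2 + 4*(α*c)*(μ*q) := by positivity
  obtain ⟨hΦpos, hρneg⟩ := quadratic_roots_sign (B := c*μ - α*lam - α*q) hαc (mul_pos hμ hq)
  have hΦroot := quadratic_eq_zero_of_root hαc.ne' hD (Or.inl hΦ)
  have hρroot := quadratic_eq_zero_of_root hαc.ne' hD (Or.inr hρ)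
  exact ⟨hΦ ▸ hΦpos, hρ ▸ hρneg, by linear_combination hΦroot, by linear_combination hρroot⟩

lemma scale_deriv_eq (hα : α ≠ 0) (hc : c ≠ 0) (hΦρ : Φ - ρ ≠ 0)
    (hΦ : (α*Φ + μ) * (c*Φ - q) = α*lam*Φ) (hρ : (α*ρ + μ) * (c*ρ - q) = α*lam*ρ) (E F : ℝ) :
    c * (((α*Φ + μ) * (Φ * E) - (α*ρ + μ) * (ρ * F)) / (α*c*(Φ - ρ)))
      - q * (((α*Φ + μ) * E - (α*ρ + μ) * F) / (α*c*(Φ - ρ)))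
      = lam * (Φ * E - ρ * F) / (c * (Φ - ρ)) := by
  field_simp
  linear_combination E * hΦ - F * hρ

lemma gamma_mul_scale_eq (hα : α ≠ 0) (hc : c ≠ 0) (hΦρ : Φ - ρ ≠ 0) {E F : ℝ}
    (hD : Φ * E - ρ * F ≠ 0) :
    c * ((Φ - ρ) / (Φ * E - ρ * F)) * (((α*Φ + μ) * E - (α*ρ + μ) * F) / (α*c*(Φ - ρ)))
      = 1 + μ/α * ((E - F) / (Φ * E - ρ * F)) := by
  field_simp
  ring

lemma exp_combinations_sign (hΦ : 0 < Φ) (hρ : ρ < 0) {b : ℝ} (hb : 0 ≤ b) :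
    0 < Φ * exp (Φ * b) - ρ * exp (ρ * b) ∧ 0 ≤ exp (Φ * b) - exp (ρ * b) := by
  have hΦE := mul_pos hΦ (exp_pos (Φ * b))
  have hρF := mul_neg_of_neg_of_pos hρ (exp_pos (ρ * b))
  have hEF : exp (ρ * b) ≤ exp (Φ * b) := exp_le_exp.2 (by nlinarith)
  constructor <;> linarith

end ScaleFunction

theorem stmt8_general (c α lam q μ k : ℝ)
    (hc : 0 < c) (hα0 : 0 < α)
    (hlam : 0 < lam) (hq : 0 < q) (hμ : 0 < μ)
    (Δ Φ ρ : ℝ)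
    (hΔ : Δ = (c*μ - α*lam - α*q)^2 + 4*α*c*μ*q)
    (hΦ : Φ = (-(c*μ - α*lam - α*q) + Real.sqrt Δ) / (2*α*c))
    (hρ : ρ = (-(c*μ - α*lam - α*q) - Real.sqrt Δ) / (2*α*c))
    (W Z C γ θf m : ℝ → ℝ)
    (hW : ∀ x, W x = ((α*Φ + μ)*Real.exp (Φ*x) - (α*ρ + μ)*Real.exp (ρ*x))/(α*c*(Φ - ρ)))
    (hZ : ∀ x, Z x = 1 + q * ∫ y in (0:ℝ)..x, W y)
    (hC : ∀ x, C x = c * W x - Z x)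
    (hγ : ∀ b, γ b = (Φ - ρ)/(Φ*Real.exp (Φ*b) - ρ*Real.exp (ρ*b)))
    (hθf : ∀ b, θf b = (Real.exp (Φ*b) - Real.exp (ρ*b))/(Φ*Real.exp (Φ*b) - ρ*Real.exp (ρ*b))) :
    ∀ a : ℝ, 0 ≤ a → ∀ b : ℝ, 0 ≤ b →
      (deriv C b = lam/(c * γ b)) ∧
      (c * γ b * W b = 1 + (μ/α) * θf b) ∧
      (0 < Real.exp (-(μ/α)*a) * deriv C b + q * W b) ∧
      ((1 - k * m a * deriv C b) / (Real.exp (-(μ/α)*a) * deriv C b + q * W b)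
        = (c * γ b - lam * k * m a) / (q + (μ/α)*q*θf b + lam*Real.exp (-(μ/α)*a))) := by
  intro a _ b hb
  obtain ⟨hΦpos, hρneg, hΦroot, hρroot⟩ := lundberg_roots hα0 hc hq hμ hΔ hΦ hρ
  have hΦρ : Φ - ρ ≠ 0 := by linarith
  obtain ⟨hD, hEF⟩ := exp_combinations_sign hΦpos hρneg hb
  have hWcont : Continuous W := by rw [funext hW]; fun_prop
  have hCderiv : deriv C b = lam * (Φ * exp (Φ * b) - ρ * exp (ρ * b)) / (c * (Φ - ρ)) := by
    have hW' := hasDerivAt_exp_combination (α*Φ + μ) (α*ρ + μ) Φ ρ (α*c*(Φ - ρ)) b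
    rw [← funext hW] at hW'
    rw [funext fun x ↦ (hC x).trans (by rw [hZ]),
      (hasDerivAt_const_mul_sub_one_add_integral c q hWcont hW').deriv, hW b]
    exact scale_deriv_eq hα0.ne' hc.ne' hΦρ hΦroot hρroot _ _
  have hγpos : 0 < γ b := hγ b ▸ div_pos (by linarith) hD
  have hγC : c * γ b * deriv C b = lam := by
    rw [hCderiv, hγ]; field_simp
  have hγW : c * γ b * W b = 1 + μ/α * θf b := by
    rw [hγ, hθf, hW]; exact gamma_mul_scale_eq hα0.ne' hc.ne' hΦρ hD.ne'
  have hθ : 0 ≤ θf b := hθf b ▸ div_nonneg hEF hD.le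
  have hcγ : 0 < c * γ b := mul_pos hc hγpos
  have hCpos : 0 < deriv C b := pos_of_mul_pos_right (hγC ▸ hlam) hcγ.le
  have hWpos : 0 < W b := pos_of_mul_pos_right (hγW ▸ by positivity) hcγ.le
  refine ⟨eq_div_of_mul_eq hcγ.ne' (by linarith), hγW, by positivity, ?_⟩
  rw [← mul_div_mul_left _ _ hcγ.ne']
  congr 1
  · linear_combination (-k * m a) * hγC
  · linear_combination exp (-(μ/α)*a) * hγC + q * hγW

theorem stmt8 (c α lam q μ k : ℝ)
    (hc : 0 < c) (hα0 : 0 < α) (hα1 : α ≤ 1)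
    (hlam : 0 < lam) (hq : 0 < q) (hμ : 0 < μ) (hk : 1 ≤ k)
    (Δ Φ ρ : ℝ)
    (hΔ : Δ = (c*μ - α*lam - α*q)^2 + 4*α*c*μ*q)
    (hΦ : Φ = (-(c*μ - α*lam - α*q) + Real.sqrt Δ) / (2*α*c))
    (hρ : ρ = (-(c*μ - α*lam - α*q) - Real.sqrt Δ) / (2*α*c))
    (W Z C γ θf m : ℝ → ℝ)
    (hW : ∀ x, W x = ((α*Φ + μ)*Real.exp (Φ*x) - (α*ρ + μ)*Real.exp (ρ*x))/(α*c*(Φ - ρ)))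
    (hZ : ∀ x, Z x = 1 + q * ∫ y in (0:ℝ)..x, W y)
    (hC : ∀ x, C x = c * W x - Z x)
    (hγ : ∀ b, γ b = (Φ - ρ)/(Φ*Real.exp (Φ*b) - ρ*Real.exp (ρ*b)))
    (hθf : ∀ b, θf b = (Real.exp (Φ*b) - Real.exp (ρ*b))/(Φ*Real.exp (Φ*b) - ρ*Real.exp (ρ*b)))
    (hm : ∀ a, m a = (1 - Real.exp (-(μ/α)*a)*((μ/α)*a + 1))/(μ/α)) :
    ∀ a : ℝ, 0 ≤ a → ∀ b : ℝ, 0 ≤ b →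
      (deriv C b = lam/(c * γ b)) ∧
      (c * γ b * W b = 1 + (μ/α) * θf b) ∧
      (0 < Real.exp (-(μ/α)*a) * deriv C b + q * W b) ∧
      ((1 - k * m a * deriv C b) / (Real.exp (-(μ/α)*a) * deriv C b + q * W b)
        = (c * γ b - lam * k * m a) / (q + (μ/α)*q*θf b + lam*Real.exp (-(μ/α)*a))) :=
  stmt8_general c α lam q μ k hc hα0 hlam hq hμ Δ Φ ρ hΔ hΦ hρ W Z C γ θf m hW hZ hC hγ hθf
end

section
/- For every a > 0 and b ≥ 0, the partial derivative of J with respect to a is given by ∂J/∂a(a,b) = λ·μ_α·e^{−μ_α a}·ψ(a,b)/D(a,b)², where ψ(a,b) = −a·k·(q + q·μ_α·θ(b)) + c·γ(b) + λk·(e^{−μ_α a} − 1)/μ_α. -/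
/-!
Write `E = exp (-u a)` with `u = μ/α`. The numerator of `J` has `a`-derivative `-λk·m'(a) = -λk·u·a·E`
(as `m(a) = ∫₀ᵃ x·u·e^{-ux} dx`) and the denominator has derivative `-λ·u·E`, so the quotient rule gives
`J' = λ·u·E·(c·γ(b) - λk·m(a) - k·a·D(a,b)) / D(a,b)²`, and the bracket simplifies to `ψ(a,b)`.
The quotient rule applies because `D > 0`: `θ(b) ≥ 0` since `Φ_q > 0 > ρ₋` and `b ≥ 0`.
-/

open Real

lemma hasDerivAt_one_sub_exp_mul_add_one_div {u : ℝ} (hu : u ≠ 0) (a : ℝ) :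
    HasDerivAt (fun x => (1 - exp (-u * x) * (u * x + 1)) / u) (u * a * exp (-u * a)) a := by
  have hexp : HasDerivAt (fun x => exp (-u * x)) (exp (-u * a) * (-u)) a := by
    simpa using ((hasDerivAt_id a).const_mul (-u)).exp
  have hlin : HasDerivAt (fun x => u * x + 1) u a := by
    simpa using ((hasDerivAt_id a).const_mul u).add_const 1
  refine (((hexp.mul hlin).const_sub 1).div_const u).congr_deriv ?_
  field_simp
  ring

lemma hasDerivAt_sub_mul_div_add_mul_exp {u C L N K : ℝ} (hu : u ≠ 0) {a : ℝ}
    (hD : C + L * exp (-u * a) ≠ 0) :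
    HasDerivAt
      (fun x => (N - K * ((1 - exp (-u * x) * (u * x + 1)) / u)) / (C + L * exp (-u * x)))
      (u * exp (-u * a) * (L * (N - K * ((1 - exp (-u * a) * (u * a + 1)) / u))
          - K * a * (C + L * exp (-u * a))) / (C + L * exp (-u * a)) ^ 2) a := by
  have hnum := ((hasDerivAt_one_sub_exp_mul_add_one_div hu a).const_mul K).const_sub N
  have hden : HasDerivAt (fun x => C + L * exp (-u * x)) (L * (exp (-u * a) * (-u))) a := by
    simpa using (((hasDerivAt_id a).const_mul (-u)).exp.const_mul L).const_add C
  refine (hnum.div hden hD).congr_deriv ?_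
  field_simp
  ring

lemma exp_sub_exp_div_mul_exp_sub_mul_exp_nonneg {Φ ρ b : ℝ} (hΦ : 0 < Φ) (hρ : ρ < 0)
    (hb : 0 ≤ b) :
    0 ≤ (exp (Φ * b) - exp (ρ * b)) / (Φ * exp (Φ * b) - ρ * exp (ρ * b)) := by
  have hΦe : 0 < Φ * exp (Φ * b) := mul_pos hΦ (exp_pos _)
  have hρe : ρ * exp (ρ * b) < 0 := mul_neg_of_neg_of_pos hρ (exp_pos _)
  have hexp : exp (ρ * b) ≤ exp (Φ * b) := exp_le_exp.mpr (by nlinarith)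
  exact div_nonneg (by linarith) (by linarith)

theorem stmt9_general (c α lam q μ k : ℝ)
    (hα0 : 0 < α)
    (hlam : 0 < lam) (hq : 0 < q) (hμ : 0 < μ)
    (Φ ρ : ℝ)
    (hΦpos : 0 < Φ) (hρneg : ρ < 0)
    (γ θf m : ℝ → ℝ) (D J ψ : ℝ → ℝ → ℝ)
    (hθf : ∀ b, θf b = (Real.exp (Φ*b) - Real.exp (ρ*b))/(Φ*Real.exp (Φ*b) - ρ*Real.exp (ρ*b)))
    (hm : ∀ a, m a = (1 - Real.exp (-(μ/α)*a)*((μ/α)*a + 1))/(μ/α))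
    (hD : ∀ a b, D a b = q + (μ/α)*q*θf b + lam*Real.exp (-(μ/α)*a))
    (hJ : ∀ a b, J a b = (c*γ b - lam*k*m a)/(D a b))
    (hψ : ∀ a b, ψ a b = -(a*k*(q + q*(μ/α)*θf b)) + c*γ b + lam*k*(Real.exp (-(μ/α)*a) - 1)/(μ/α)) :
    ∀ a : ℝ, 0 < a → ∀ b : ℝ, 0 ≤ b →
      deriv (fun a' => J a' b) a
        = lam * (μ/α) * Real.exp (-(μ/α)*a) * ψ a b / (D a b)^2 := by
  intro a _ b hb
  have hu : 0 < μ / α := div_pos hμ hα0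
  have hθ : 0 ≤ θf b := hθf b ▸ exp_sub_exp_div_mul_exp_sub_mul_exp_nonneg hΦpos hρneg hb
  have hDpos : 0 < D a b := by
    have := mul_nonneg (mul_nonneg hu.le hq.le) hθ
    have := mul_pos hlam (exp_pos (-(μ / α) * a))
    rw [hD]
    linarith
  have hJ' : (fun a' => J a' b) = fun x => (c * γ b - lam * k * ((1 - exp (-(μ/α) * x)
      * ((μ/α) * x + 1)) / (μ/α))) / (q + (μ/α) * q * θf b + lam * exp (-(μ/α) * x)) := by
    funext x
    rw [hJ, hD, hm]
  rw [hJ', (hasDerivAt_sub_mul_div_add_mul_exp hu.ne' (hD a b ▸ hDpos.ne')).deriv, hψ, hD]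
  field_simp
  ring

theorem stmt9 (c α lam q μ k : ℝ)
    (hc : 0 < c) (hα0 : 0 < α) (hα1 : α ≤ 1)
    (hlam : 0 < lam) (hq : 0 < q) (hμ : 0 < μ) (hk : 1 ≤ k)
    (Δ Φ ρ : ℝ)
    (hΔ : Δ = (c*μ - α*lam - α*q)^2 + 4*α*c*μ*q)
    (hΦ : Φ = (-(c*μ - α*lam - α*q) + Real.sqrt Δ) / (2*α*c))
    (hρ : ρ = (-(c*μ - α*lam - α*q) - Real.sqrt Δ) / (2*α*c))
    (hΦpos : 0 < Φ) (hρneg : ρ < 0)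
    (γ θf m : ℝ → ℝ) (D J ψ : ℝ → ℝ → ℝ)
    (hγ : ∀ b, γ b = (Φ - ρ)/(Φ*Real.exp (Φ*b) - ρ*Real.exp (ρ*b)))
    (hθf : ∀ b, θf b = (Real.exp (Φ*b) - Real.exp (ρ*b))/(Φ*Real.exp (Φ*b) - ρ*Real.exp (ρ*b)))
    (hm : ∀ a, m a = (1 - Real.exp (-(μ/α)*a)*((μ/α)*a + 1))/(μ/α))
    (hD : ∀ a b, D a b = q + (μ/α)*q*θf b + lam*Real.exp (-(μ/α)*a))
    (hJ : ∀ a b, J a b = (c*γ b - lam*k*m a)/(D a b))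
    (hψ : ∀ a b, ψ a b = -(a*k*(q + q*(μ/α)*θf b)) + c*γ b + lam*k*(Real.exp (-(μ/α)*a) - 1)/(μ/α)) :
    ∀ a : ℝ, 0 < a → ∀ b : ℝ, 0 ≤ b →
      deriv (fun a' => J a' b) a
        = lam * (μ/α) * Real.exp (-(μ/α)*a) * ψ a b / (D a b)^2 :=
  stmt9_general c α lam q μ k hα0 hlam hq hμ Φ ρ hΦpos hρneg γ θf m D J ψ hθf hm hD hJ hψ
end

section
/- For every fixed b ≥ 0, the function a ↦ ψ(a,b) = −a·k·(q + q·μ_α·θ(b)) + c·γ(b) + λk·(e^{−μ_α a} − 1)/μ_α is strictly decreasing on [0,∞), satisfies ψ(0,b) = c·γ(b) > 0 and ψ(a,b) → −∞ as a → ∞; consequently there exists a unique a* ∈ (0,∞) with ψ(a*,b) = 0, and a* is the unique critical point of a ↦ J(a,b) on (0,∞). -/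
/-!
For fixed `b`, `ψ(·, b)` is an affine function of negative slope `-k (q + q μ_α θ(b))` plus the
nonincreasing term `λ k (e^{-μ_α a} - 1) / μ_α`, so it decreases strictly from `ψ(0, b) = c γ(b) > 0`
to `-∞` and has exactly one root. Differentiating the quotient `J(·, b)`, the terms `k a λ e^{-μ_α a}`
coming from numerator and denominator cancel and
`∂ₐJ(a, b) = λ μ_α e^{-μ_α a} ψ(a, b) / D(a, b)²`, so the critical points of `J` are the roots of `ψ`.
-/

open Real Filter Set

theorem exists_pos_forall_eq_zero_iff_of_strictAnti {f : ℝ → ℝ} (hf : Continuous f)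
    (hanti : StrictAnti f) (h0 : 0 < f 0) (htop : Tendsto f atTop atBot) :
    ∃ a, 0 < a ∧ ∀ x, f x = 0 ↔ x = a := by
  obtain ⟨a₁, hfa₁, ha₁⟩ : ∃ a₁, f a₁ < 0 ∧ 0 < a₁ :=
    ((htop.eventually (eventually_lt_atBot 0)).and (eventually_gt_atTop 0)).exists
  obtain ⟨a, ⟨ha, -⟩, hfa⟩ := intermediate_value_Ioo' ha₁.le hf.continuousOn ⟨hfa₁, h0⟩
  exact ⟨a, ha, fun x => ⟨fun hx => hanti.injective (hx.trans hfa.symm), fun hx => hx ▸ hfa⟩⟩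

section

variable {Φ ρ : ℝ}

theorem exp_weighted_sub_pos (hΦ : 0 < Φ) (hρ : ρ < 0) (b : ℝ) :
    0 < Φ * exp (Φ * b) - ρ * exp (ρ * b) := by
  have := mul_pos hΦ (exp_pos (Φ * b))
  have := mul_neg_of_neg_of_pos hρ (exp_pos (ρ * b))
  linarith

theorem div_exp_weighted_sub_nonneg (hΦ : 0 < Φ) (hρ : ρ < 0) {b : ℝ} (hb : 0 ≤ b) :
    0 ≤ (exp (Φ * b) - exp (ρ * b)) / (Φ * exp (Φ * b) - ρ * exp (ρ * b)) := by
  have : exp (ρ * b) ≤ exp (Φ * b) := exp_le_exp.mpr (by nlinarith)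
  exact div_nonneg (by linarith) (exp_weighted_sub_pos hΦ hρ b).le

end

section

variable {E G k lam r : ℝ}

theorem strictAnti_linear_add_exp (hkE : 0 < k * E) (hlamk : 0 ≤ lam * k) (hr : 0 < r) :
    StrictAnti fun a => -(a * k * E) + G + lam * k * (exp (-r * a) - 1) / r := by
  intro x y hxy
  have hexp : exp (-r * y) < exp (-r * x) := exp_lt_exp.mpr (by nlinarith)
  have : lam * k * (exp (-r * y) - 1) / r ≤ lam * k * (exp (-r * x) - 1) / r := by
    gcongr
  nlinarith

theorem tendsto_linear_add_exp_atBot (hkE : 0 < k * E) (hlamk : 0 ≤ lam * k) (hr : 0 < r) :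
    Tendsto (fun a => -(a * k * E) + G + lam * k * (exp (-r * a) - 1) / r) atTop atBot := by
  have hlin : Tendsto (fun a => G - a * (k * E)) atTop atBot :=
    tendsto_atBot_add_const_left _ G
      (tendsto_neg_atTop_atBot.comp (tendsto_id.atTop_mul_const hkE))
  refine tendsto_atBot_mono' _ ?_ hlin
  filter_upwards [eventually_ge_atTop 0] with a ha
  have : exp (-r * a) ≤ 1 := exp_le_one_iff.mpr (by nlinarith)
  have : lam * k * (exp (-r * a) - 1) / r ≤ 0 :=
    div_nonpos_of_nonpos_of_nonneg (mul_nonpos_of_nonneg_of_nonpos hlamk (by linarith)) hr.le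
  linarith [mul_assoc a k E]

theorem hasDerivAt_truncated_exp_moment (hr : r ≠ 0) (a : ℝ) :
    HasDerivAt (fun a => (1 - exp (-r * a) * (r * a + 1)) / r) (r * a * exp (-r * a)) a := by
  have hexp : HasDerivAt (fun a => exp (-r * a)) (exp (-r * a) * -r) a := by
    simpa using ((hasDerivAt_id a).const_mul (-r)).exp
  have hlin : HasDerivAt (fun a => r * a + 1) r a := by
    simpa using ((hasDerivAt_id a).const_mul r).add_const 1
  have hprod : HasDerivAt (fun a => exp (-r * a) * (r * a + 1)) _ a := hexp.mul hlin
  refine ((hprod.const_sub 1).div_const r).congr_deriv ?_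
  field_simp
  ring

theorem hasDerivAt_truncated_moment_ratio (hr : r ≠ 0) {a : ℝ}
    (hD : E + lam * exp (-r * a) ≠ 0) :
    HasDerivAt (fun a => (G - lam * k * ((1 - exp (-r * a) * (r * a + 1)) / r)) /
        (E + lam * exp (-r * a)))
      (lam * r * exp (-r * a) * (-(a * k * E) + G + lam * k * (exp (-r * a) - 1) / r) /
        (E + lam * exp (-r * a)) ^ 2) a := by
  have hexp : HasDerivAt (fun a => exp (-r * a)) (exp (-r * a) * -r) a := by
    simpa using ((hasDerivAt_id a).const_mul (-r)).exp
  refine ((((hasDerivAt_truncated_exp_moment hr a).const_mul (lam * k)).const_sub G).div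
    ((hexp.const_mul lam).const_add E) hD).congr_deriv ?_
  field_simp
  ring

theorem deriv_truncated_moment_ratio_eq_zero_iff (hr : 0 < r) (hlam : 0 < lam) {a : ℝ}
    (hD : 0 < E + lam * exp (-r * a)) :
    deriv (fun a => (G - lam * k * ((1 - exp (-r * a) * (r * a + 1)) / r)) /
        (E + lam * exp (-r * a))) a = 0 ↔
      -(a * k * E) + G + lam * k * (exp (-r * a) - 1) / r = 0 := by
  have hfactor : 0 < lam * r * exp (-r * a) := by positivity
  rw [(hasDerivAt_truncated_moment_ratio hr.ne' hD.ne').deriv, div_eq_zero_iff, mul_eq_zero,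
    or_iff_right hfactor.ne', or_iff_left (pow_ne_zero 2 hD.ne')]

end

theorem stmt10_general (c α lam q μ k : ℝ)
    (hc : 0 < c) (hα0 : 0 < α)
    (hlam : 0 < lam) (hq : 0 < q) (hμ : 0 < μ) (hk : 1 ≤ k)
    (Φ ρ : ℝ)
    (hΦpos : 0 < Φ) (hρneg : ρ < 0)
    (γ θf m : ℝ → ℝ) (D J ψ : ℝ → ℝ → ℝ)
    (hγ : ∀ b, γ b = (Φ - ρ)/(Φ*Real.exp (Φ*b) - ρ*Real.exp (ρ*b)))
    (hθf : ∀ b, θf b = (Real.exp (Φ*b) - Real.exp (ρ*b))/(Φ*Real.exp (Φ*b) - ρ*Real.exp (ρ*b)))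
    (hm : ∀ a, m a = (1 - Real.exp (-(μ/α)*a)*((μ/α)*a + 1))/(μ/α))
    (hD : ∀ a b, D a b = q + (μ/α)*q*θf b + lam*Real.exp (-(μ/α)*a))
    (hJ : ∀ a b, J a b = (c*γ b - lam*k*m a)/(D a b))
    (hψ : ∀ a b, ψ a b = -(a*k*(q + q*(μ/α)*θf b)) + c*γ b + lam*k*(Real.exp (-(μ/α)*a) - 1)/(μ/α)) :
    ∀ b : ℝ, 0 ≤ b →
      StrictAntiOn (fun a => ψ a b) (Set.Ici 0) ∧
      ψ 0 b = c * γ b ∧ 0 < c * γ b ∧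
      Filter.Tendsto (fun a => ψ a b) Filter.atTop Filter.atBot ∧
      ∃ astar : ℝ, 0 < astar ∧ ψ astar b = 0 ∧
        (∀ a, 0 < a → ψ a b = 0 → a = astar) ∧
        (∀ a, 0 < a → (deriv (fun a' => J a' b) a = 0 ↔ a = astar)) := by
  intro b hb
  set r := μ / α
  set E := q + r * q * θf b
  have hr : 0 < r := div_pos hμ hα0
  have hk0 : 0 < k := by linarith
  have hE : 0 < E := by
    have := div_exp_weighted_sub_nonneg hΦpos hρneg hb
    rw [← hθf] at this
    positivity
  have hψb : (fun a => ψ a b) =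
      fun a => -(a * k * E) + c * γ b + lam * k * (exp (-r * a) - 1) / r := by
    funext a; rw [hψ]; ring
  have hanti : StrictAnti fun a => ψ a b := by
    rw [hψb]; exact strictAnti_linear_add_exp (by positivity) (by positivity) hr
  have htend : Tendsto (fun a => ψ a b) atTop atBot := by
    rw [hψb]; exact tendsto_linear_add_exp_atBot (by positivity) (by positivity) hr
  have hγpos : 0 < c * γ b := by
    rw [hγ]; exact mul_pos hc (div_pos (by linarith) (exp_weighted_sub_pos hΦpos hρneg b))
  have hψ0 : ψ 0 b = c * γ b := by simp [hψ]
  obtain ⟨astar, hastar, hroot⟩ := exists_pos_forall_eq_zero_iff_of_strictAnti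
    (by rw [hψb]; fun_prop) hanti (hψ0 ▸ hγpos) htend
  refine ⟨hanti.strictAntiOn _, hψ0, hγpos, htend, astar, hastar, (hroot astar).mpr rfl,
    fun a _ => (hroot a).mp, fun a _ => ?_⟩
  have hJb : (fun a => J a b) = fun a =>
      (c * γ b - lam * k * ((1 - exp (-r * a) * (r * a + 1)) / r)) / (E + lam * exp (-r * a)) := by
    funext a; rw [hJ, hm, hD]
  rw [hJb, deriv_truncated_moment_ratio_eq_zero_iff hr hlam (by positivity), ← congrFun hψb a,
    hroot]

theorem stmt10 (c α lam q μ k : ℝ)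
    (hc : 0 < c) (hα0 : 0 < α) (hα1 : α ≤ 1)
    (hlam : 0 < lam) (hq : 0 < q) (hμ : 0 < μ) (hk : 1 ≤ k)
    (Δ Φ ρ : ℝ)
    (hΔ : Δ = (c*μ - α*lam - α*q)^2 + 4*α*c*μ*q)
    (hΦ : Φ = (-(c*μ - α*lam - α*q) + Real.sqrt Δ) / (2*α*c))
    (hρ : ρ = (-(c*μ - α*lam - α*q) - Real.sqrt Δ) / (2*α*c))
    (hΦpos : 0 < Φ) (hρneg : ρ < 0)
    (γ θf m : ℝ → ℝ) (D J ψ : ℝ → ℝ → ℝ)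
    (hγ : ∀ b, γ b = (Φ - ρ)/(Φ*Real.exp (Φ*b) - ρ*Real.exp (ρ*b)))
    (hθf : ∀ b, θf b = (Real.exp (Φ*b) - Real.exp (ρ*b))/(Φ*Real.exp (Φ*b) - ρ*Real.exp (ρ*b)))
    (hm : ∀ a, m a = (1 - Real.exp (-(μ/α)*a)*((μ/α)*a + 1))/(μ/α))
    (hD : ∀ a b, D a b = q + (μ/α)*q*θf b + lam*Real.exp (-(μ/α)*a))
    (hJ : ∀ a b, J a b = (c*γ b - lam*k*m a)/(D a b))
    (hψ : ∀ a b, ψ a b = -(a*k*(q + q*(μ/α)*θf b)) + c*γ b + lam*k*(Real.exp (-(μ/α)*a) - 1)/(μ/α)) :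
    ∀ b : ℝ, 0 ≤ b →
      StrictAntiOn (fun a => ψ a b) (Set.Ici 0) ∧
      ψ 0 b = c * γ b ∧ 0 < c * γ b ∧
      Filter.Tendsto (fun a => ψ a b) Filter.atTop Filter.atBot ∧
      ∃ astar : ℝ, 0 < astar ∧ ψ astar b = 0 ∧
        (∀ a, 0 < a → ψ a b = 0 → a = astar) ∧
        (∀ a, 0 < a → (deriv (fun a' => J a' b) a = 0 ↔ a = astar)) :=
  stmt10_general c α lam q μ k hc hα0 hlam hq hμ hk Φ ρ hΦpos hρneg γ θf m D J ψ hγ hθf hm hD hJ hψ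
end

section
/- For every fixed b ≥ 0: lim_{a→0+} ∂J/∂a(a,b) = λμ·c·γ(b)/(α·(q + μ_α·q·θ(b) + λ)²) > 0, and there exists A > 0 such that ∂J/∂a(a,b) < 0 for all a > A. In particular, the supremum of a ↦ J(a,b) over (0,∞) is attained neither at a = 0 nor in the limit a → ∞. -/
/-!
For fixed `b`, write `r = μ_α`, `C = c γ(b) > 0` and `E = q + μ_α q θ(b) > 0`, so that
`D(a) = E + λ e^{-r a}`. The quotient rule gives
`∂J/∂a = λ r e^{-r a} ψ(a) / D(a)²` with `ψ(a) = C - a k E + λ k (e^{-r a} - 1) / r`.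
Since `ψ(0) = C > 0`, the derivative tends to `λ r C / (E + λ)²` at `0⁺`, so `J` increases near `0`;
since `ψ(a) ≤ C - a k E` for `a ≥ 0`, `J` strictly decreases beyond `C / (k E)` and hence stays
strictly above its limit at infinity.
-/

open Real Filter Topology Set

theorem exists_lt_of_tendsto_deriv_nhdsGT_pos {f : ℝ → ℝ} {x ℓ : ℝ} (hf : Continuous f)
    (hd : Tendsto (deriv f) (𝓝[>] x) (𝓝 ℓ)) (hℓ : 0 < ℓ) : ∃ y, x < y ∧ f x < f y := by
  obtain ⟨y, hxy, hpos⟩ : ∃ y, x < y ∧ ∀ z ∈ Ioo x y, 0 < deriv f z :=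
    (mem_nhdsGT_iff_exists_Ioo_subset.mp (hd.eventually (eventually_gt_nhds hℓ))).imp
      fun y ⟨hxy, hy⟩ => ⟨hxy, fun z hz => hy hz⟩
  have hmono : StrictMonoOn f (Icc x y) :=
    strictMonoOn_of_deriv_pos (convex_Icc x y) hf.continuousOn
      fun z hz => hpos z (by rwa [interior_Icc] at hz)
  exact ⟨y, hxy, hmono (left_mem_Icc.mpr hxy.le) (right_mem_Icc.mpr hxy.le) hxy⟩

theorem lt_of_tendsto_atTop_of_deriv_neg {f : ℝ → ℝ} {A L x : ℝ} (hf : Continuous f)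
    (hd : ∀ a, A < a → deriv f a < 0) (hL : Tendsto f atTop (𝓝 L)) (hx : A ≤ x) :
    L < f x := by
  have hanti : StrictAntiOn f (Ici A) :=
    strictAntiOn_of_deriv_neg (convex_Ici A) hf.continuousOn
      fun z hz => hd z (by rwa [interior_Ici] at hz)
  have hle : L ≤ f (x + 1) :=
    le_of_tendsto hL <| eventually_atTop.mpr ⟨x + 1, fun y hy =>
      hanti.antitoneOn (mem_Ici.mpr (by linarith)) (mem_Ici.mpr (by linarith)) hy⟩
  exact hle.trans_lt (hanti (mem_Ici.mpr hx) (mem_Ici.mpr (by linarith)) (by linarith))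

theorem mul_exp_sub_mul_exp_pos {Φ ρ : ℝ} (hΦ : 0 < Φ) (hρ : ρ < 0) (b : ℝ) :
    0 < Φ * exp (Φ * b) - ρ * exp (ρ * b) := by
  nlinarith [mul_pos hΦ (exp_pos (Φ * b)), mul_neg_of_neg_of_pos hρ (exp_pos (ρ * b))]

noncomputable def expPartialMean (r a : ℝ) : ℝ := (1 - exp (-r * a) * (r * a + 1)) / r

theorem hasDerivAt_expPartialMean {r : ℝ} (hr : r ≠ 0) (a : ℝ) :
    HasDerivAt (expPartialMean r) (a * r * exp (-r * a)) a := by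
  have h := ((((hasDerivAt_id' a).const_mul (-r)).exp.mul
    (((hasDerivAt_id' a).const_mul r).add_const 1)).const_sub 1).div_const r
  refine h.congr_deriv ?_
  field_simp
  ring

theorem tendsto_expPartialMean_atTop {r : ℝ} (hr : 0 < r) :
    Tendsto (expPartialMean r) atTop (𝓝 r⁻¹) := by
  have hra : Tendsto (fun a => r * a) atTop atTop := tendsto_id.const_mul_atTop hr
  have hexp : Tendsto (fun a => exp (-(r * a))) atTop (𝓝 0) :=
    tendsto_exp_neg_atTop_nhds_zero.comp hra
  have hpow : Tendsto (fun a => (r * a) ^ 1 * exp (-(r * a))) atTop (𝓝 0) :=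
    (tendsto_pow_mul_exp_neg_atTop_nhds_zero 1).comp hra
  have h := ((tendsto_const_nhds (x := (1 : ℝ))).sub (hpow.add hexp)).div_const r
  simp only [pow_one, add_zero, sub_zero, one_div] at h
  refine h.congr fun a => ?_
  simp only [expPartialMean, neg_mul]
  ring

section ValueRatio

variable (r lam k C E : ℝ)

/-- `J(·, b)` is `valueRatio μ_α λ k (c γ(b)) (q + μ_α q θ(b))`. -/
noncomputable def valueRatio (a : ℝ) : ℝ :=
  (C - lam * k * expPartialMean r a) / (E + lam * exp (-r * a))

variable {r lam k C E}

theorem valueRatio_denom_pos (hE : 0 < E) (hlam : 0 ≤ lam) (a : ℝ) :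
    0 < E + lam * exp (-r * a) := by
  positivity

theorem hasDerivAt_valueRatio (hr : r ≠ 0) (hE : 0 < E) (hlam : 0 ≤ lam) (a : ℝ) :
    HasDerivAt (valueRatio r lam k C E)
      (lam * r * exp (-r * a) * (-(a * k * E) + C + lam * k * (exp (-r * a) - 1) / r)
        / (E + lam * exp (-r * a)) ^ 2) a := by
  have hD := valueRatio_denom_pos (r := r) hE hlam a
  have hnum := ((hasDerivAt_expPartialMean hr a).const_mul (lam * k)).const_sub C
  have hden := (((hasDerivAt_id' a).const_mul (-r)).exp.const_mul lam).const_add E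
  refine (hnum.div hden hD.ne').congr_deriv ?_
  simp only [expPartialMean]
  field_simp
  ring

theorem continuous_valueRatio (hr : r ≠ 0) (hE : 0 < E) (hlam : 0 ≤ lam) :
    Continuous (valueRatio r lam k C E) :=
  continuous_iff_continuousAt.mpr fun a =>
    (hasDerivAt_valueRatio (k := k) (C := C) hr hE hlam a).continuousAt

theorem tendsto_deriv_valueRatio_nhdsGT_zero (hr : r ≠ 0) (hE : 0 < E) (hlam : 0 ≤ lam) :
    Tendsto (deriv (valueRatio r lam k C E)) (𝓝[>] 0) (𝓝 (lam * r * C / (E + lam) ^ 2)) := by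
  have hderiv : deriv (valueRatio r lam k C E) = fun a =>
      lam * r * exp (-r * a) * (-(a * k * E) + C + lam * k * (exp (-r * a) - 1) / r)
        / (E + lam * exp (-r * a)) ^ 2 :=
    funext fun a => (hasDerivAt_valueRatio hr hE hlam a).deriv
  have hcont : Continuous (deriv (valueRatio r lam k C E)) := by
    rw [hderiv]
    exact Continuous.div (by fun_prop) (by fun_prop)
      fun a => (pow_pos (valueRatio_denom_pos hE hlam a) 2).ne'
  have h0 : deriv (valueRatio r lam k C E) 0 = lam * r * C / (E + lam) ^ 2 := by
    simp [hderiv]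
  rw [← h0]
  exact hcont.continuousAt.continuousWithinAt.tendsto

theorem exists_forall_deriv_valueRatio_neg (hr : 0 < r) (hlam : 0 < lam) (hk : 0 < k)
    (hE : 0 < E) : ∃ A, 0 < A ∧ ∀ a, A < a → deriv (valueRatio r lam k C E) a < 0 := by
  refine ⟨|C| / (k * E) + 1, by positivity, fun a ha => ?_⟩
  have ha0 : 0 < a := lt_of_lt_of_le (by positivity) ha.le
  have hCa : C < a * k * E := by
    have : |C| < a * (k * E) := (div_lt_iff₀ (by positivity)).mp (by linarith)
    linarith [le_abs_self C]
  have hcorr : lam * k * (exp (-r * a) - 1) / r ≤ 0 := by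
    have : exp (-r * a) ≤ 1 := exp_le_one_iff.mpr (by nlinarith)
    exact div_nonpos_of_nonpos_of_nonneg
      (mul_nonpos_of_nonneg_of_nonpos (by positivity) (by linarith)) hr.le
  rw [(hasDerivAt_valueRatio hr.ne' hE hlam.le a).deriv]
  exact div_neg_of_neg_of_pos (mul_neg_of_pos_of_neg (by positivity) (by linarith))
    (pow_pos (valueRatio_denom_pos hE hlam.le a) 2)

theorem tendsto_valueRatio_atTop (hr : 0 < r) (hE : 0 < E) :
    Tendsto (valueRatio r lam k C E) atTop (𝓝 ((C - lam * k * r⁻¹) / E)) := by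
  have hexp : Tendsto (fun a => exp (-r * a)) atTop (𝓝 0) := by
    simpa only [neg_mul, Function.comp_def, id_eq] using
      tendsto_exp_neg_atTop_nhds_zero.comp (tendsto_id.const_mul_atTop hr)
  have h := (tendsto_const_nhds (x := C)).sub
    ((tendsto_expPartialMean_atTop hr).const_mul (lam * k)) |>.div
    ((tendsto_const_nhds (x := E)).add (hexp.const_mul lam)) (by simpa using hE.ne')
  simp only [mul_zero, add_zero] at h
  exact h

end ValueRatio

theorem stmt11_general (c α lam q μ k : ℝ)
    (hc : 0 < c) (hα0 : 0 < α)
    (hlam : 0 < lam) (hq : 0 < q) (hμ : 0 < μ) (hk : 1 ≤ k)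
    (Φ ρ : ℝ)
    (hΦpos : 0 < Φ) (hρneg : ρ < 0)
    (γ θf m : ℝ → ℝ) (D J : ℝ → ℝ → ℝ)
    (hγ : ∀ b, γ b = (Φ - ρ)/(Φ*Real.exp (Φ*b) - ρ*Real.exp (ρ*b)))
    (hθf : ∀ b, θf b = (Real.exp (Φ*b) - Real.exp (ρ*b))/(Φ*Real.exp (Φ*b) - ρ*Real.exp (ρ*b)))
    (hm : ∀ a, m a = (1 - Real.exp (-(μ/α)*a)*((μ/α)*a + 1))/(μ/α))
    (hD : ∀ a b, D a b = q + (μ/α)*q*θf b + lam*Real.exp (-(μ/α)*a))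
    (hJ : ∀ a b, J a b = (c*γ b - lam*k*m a)/(D a b)) :
    ∀ b : ℝ, 0 ≤ b →
      Filter.Tendsto (fun a => deriv (fun a' => J a' b) a)
        (nhdsWithin 0 (Set.Ioi 0))
        (nhds (lam*μ*c*γ b / (α*(q + (μ/α)*q*θf b + lam)^2))) ∧
      0 < lam*μ*c*γ b / (α*(q + (μ/α)*q*θf b + lam)^2) ∧
      (∃ A : ℝ, 0 < A ∧ ∀ a, A < a → deriv (fun a' => J a' b) a < 0) ∧
      (∃ a : ℝ, 0 < a ∧ J 0 b < J a b) ∧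
      (∃ L : ℝ, Filter.Tendsto (fun a => J a b) Filter.atTop (nhds L) ∧
        ∃ a : ℝ, 0 < a ∧ L < J a b) := by
  intro b hb
  have hr : 0 < μ / α := div_pos hμ hα0
  have hden := mul_exp_sub_mul_exp_pos hΦpos hρneg b
  have hγpos : 0 < γ b := by
    rw [hγ]
    exact div_pos (by linarith) hden
  have hθ : 0 ≤ θf b := by
    rw [hθf]
    exact div_nonneg (sub_nonneg.mpr (exp_le_exp.mpr (by nlinarith))) hden.le
  have hE : 0 < q + μ / α * q * θf b := by positivity
  set V := valueRatio (μ / α) lam k (c * γ b) (q + μ / α * q * θf b)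
  have hJV : ∀ a, J a b = V a := fun a => by
    simp only [hJ, hD, hm, V, valueRatio, expPartialMean]
  have hcont : Continuous V := continuous_valueRatio hr.ne' hE hlam.le
  have hderiv := tendsto_deriv_valueRatio_nhdsGT_zero (k := k) (C := c * γ b) hr.ne' hE hlam.le
  have hlimit : lam * μ * c * γ b / (α * (q + μ / α * q * θf b + lam) ^ 2)
      = lam * (μ / α) * (c * γ b) / (q + μ / α * q * θf b + lam) ^ 2 := by
    field_simp
  obtain ⟨A, hA, hneg⟩ :=
    exists_forall_deriv_valueRatio_neg (k := k) (C := c * γ b) hr hlam (by linarith) hE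
  obtain ⟨a, ha, hJa⟩ := exists_lt_of_tendsto_deriv_nhdsGT_pos hcont hderiv (by positivity)
  have hlim := tendsto_valueRatio_atTop (lam := lam) (k := k) (C := c * γ b) hr hE
  simp only [hJV, hlimit]
  exact ⟨hderiv, by positivity, ⟨A, hA, hneg⟩, ⟨a, ha, hJa⟩,
    _, hlim, A, hA, lt_of_tendsto_atTop_of_deriv_neg hcont hneg hlim le_rfl⟩

theorem stmt11 (c α lam q μ k : ℝ)
    (hc : 0 < c) (hα0 : 0 < α) (hα1 : α ≤ 1)
    (hlam : 0 < lam) (hq : 0 < q) (hμ : 0 < μ) (hk : 1 ≤ k)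
    (Δ Φ ρ : ℝ)
    (hΔ : Δ = (c*μ - α*lam - α*q)^2 + 4*α*c*μ*q)
    (hΦ : Φ = (-(c*μ - α*lam - α*q) + Real.sqrt Δ) / (2*α*c))
    (hρ : ρ = (-(c*μ - α*lam - α*q) - Real.sqrt Δ) / (2*α*c))
    (hΦpos : 0 < Φ) (hρneg : ρ < 0)
    (γ θf m : ℝ → ℝ) (D J ψ : ℝ → ℝ → ℝ)
    (hγ : ∀ b, γ b = (Φ - ρ)/(Φ*Real.exp (Φ*b) - ρ*Real.exp (ρ*b)))
    (hθf : ∀ b, θf b = (Real.exp (Φ*b) - Real.exp (ρ*b))/(Φ*Real.exp (Φ*b) - ρ*Real.exp (ρ*b)))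
    (hm : ∀ a, m a = (1 - Real.exp (-(μ/α)*a)*((μ/α)*a + 1))/(μ/α))
    (hD : ∀ a b, D a b = q + (μ/α)*q*θf b + lam*Real.exp (-(μ/α)*a))
    (hJ : ∀ a b, J a b = (c*γ b - lam*k*m a)/(D a b))
    (hψ : ∀ a b, ψ a b = -(a*k*(q + q*(μ/α)*θf b)) + c*γ b + lam*k*(Real.exp (-(μ/α)*a) - 1)/(μ/α)) :
    ∀ b : ℝ, 0 ≤ b →
      Filter.Tendsto (fun a => deriv (fun a' => J a' b) a)
        (nhdsWithin 0 (Set.Ioi 0))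
        (nhds (lam*μ*c*γ b / (α*(q + (μ/α)*q*θf b + lam)^2))) ∧
      0 < lam*μ*c*γ b / (α*(q + (μ/α)*q*θf b + lam)^2) ∧
      (∃ A : ℝ, 0 < A ∧ ∀ a, A < a → deriv (fun a' => J a' b) a < 0) ∧
      (∃ a : ℝ, 0 < a ∧ J 0 b < J a b) ∧
      (∃ L : ℝ, Filter.Tendsto (fun a => J a b) Filter.atTop (nhds L) ∧
        ∃ a : ℝ, 0 < a ∧ L < J a b) :=
  stmt11_general c α lam q μ k hc hα0 hlam hq hμ hk Φ ρ hΦpos hρneg γ θf m D J hγ hθf hm hD hJ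
end

section
/- As b → ∞ one has γ(b) → 0 and θ(b) → 1/Φ_q; consequently, for every fixed a ≥ 0, lim_{b→∞} J(a,b) = −λk·m(a)/(q + μq/(αΦ_q) + λ·e^{−μ_α a}) ≤ 0. In particular, choosing the dividend barrier b = ∞ can never be optimal. -/
/-!
Since `ρ₋ < Φ_q`, every combination `u e^{Φ_q b} - v e^{ρ₋ b}` is `u e^{Φ_q b} (1 + o(1))` as
`b → ∞`. Hence the common denominator of `γ` and `θ` grows like `Φ_q e^{Φ_q b}`, which gives
`γ(b) → 0` and `θ(b) → 1/Φ_q`; the limit of `J(a, b)` follows by continuity. Its sign is that of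
`-m(a)`, and `m(a) ≥ 0` is the inequality `e^{-x}(x + 1) ≤ 1`.
-/

open Filter Topology Real

section ExpCombination

variable {Φ ρ : ℝ}

lemma tendsto_exp_neg_mul_mul_sub_mul_exp (hρΦ : ρ < Φ) (u v : ℝ) :
    Tendsto (fun b => exp (-(Φ * b)) * (u * exp (Φ * b) - v * exp (ρ * b))) atTop (𝓝 u) := by
  have hdecay : Tendsto (fun b => exp ((ρ - Φ) * b)) atTop (𝓝 0) :=
    tendsto_exp_atBot.comp (tendsto_id.const_mul_atTop_of_neg (sub_neg.2 hρΦ))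
  have hlim : Tendsto (fun b => u - v * exp ((ρ - Φ) * b)) atTop (𝓝 u) := by
    simpa using tendsto_const_nhds.sub (hdecay.const_mul v)
  refine hlim.congr fun b => ?_
  rw [mul_sub, mul_left_comm, ← exp_add, neg_add_cancel, exp_zero, mul_one, mul_left_comm,
    ← exp_add, neg_add_eq_sub, ← sub_mul]

lemma tendsto_mul_exp_sub_mul_exp_atTop (hΦ : 0 < Φ) (hρΦ : ρ < Φ) :
    Tendsto (fun b => Φ * exp (Φ * b) - ρ * exp (ρ * b)) atTop atTop := by
  have hgrowth : Tendsto (fun b => exp (Φ * b)) atTop atTop :=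
    tendsto_exp_atTop.comp (tendsto_id.const_mul_atTop hΦ)
  refine (hgrowth.atTop_mul_pos hΦ (tendsto_exp_neg_mul_mul_sub_mul_exp hρΦ Φ ρ)).congr
    fun b => ?_
  rw [← mul_assoc, ← exp_add, add_neg_cancel, exp_zero, one_mul]

lemma tendsto_mul_exp_sub_mul_exp_div (hρΦ : ρ < Φ) (u v u' v' : ℝ) (hu' : u' ≠ 0) :
    Tendsto (fun b => (u * exp (Φ * b) - v * exp (ρ * b)) / (u' * exp (Φ * b) - v' * exp (ρ * b)))
      atTop (𝓝 (u / u')) := by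
  refine ((tendsto_exp_neg_mul_mul_sub_mul_exp hρΦ u v).div
    (tendsto_exp_neg_mul_mul_sub_mul_exp hρΦ u' v') hu').congr fun b => ?_
  exact mul_div_mul_left _ _ (exp_ne_zero _)

end ExpCombination

lemma exp_neg_mul_add_one_le_one (x : ℝ) : exp (-x) * (x + 1) ≤ 1 := by
  calc exp (-x) * (x + 1) ≤ exp (-x) * exp x := by gcongr; exact add_one_le_exp x
    _ = 1 := by rw [← exp_add, neg_add_cancel, exp_zero]

theorem stmt14_general (c α lam q μ k : ℝ)
    (hα0 : 0 < α)
    (hlam : 0 < lam) (hq : 0 < q) (hμ : 0 < μ) (hk : 1 ≤ k)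
    (Φ ρ : ℝ)
    (hΦpos : 0 < Φ) (hρneg : ρ < 0)
    (γ θf m : ℝ → ℝ) (D J : ℝ → ℝ → ℝ)
    (hγ : ∀ b, γ b = (Φ - ρ)/(Φ*Real.exp (Φ*b) - ρ*Real.exp (ρ*b)))
    (hθf : ∀ b, θf b = (Real.exp (Φ*b) - Real.exp (ρ*b))/(Φ*Real.exp (Φ*b) - ρ*Real.exp (ρ*b)))
    (hm : ∀ a, m a = (1 - Real.exp (-(μ/α)*a)*((μ/α)*a + 1))/(μ/α))
    (hD : ∀ a b, D a b = q + (μ/α)*q*θf b + lam*Real.exp (-(μ/α)*a))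
    (hJ : ∀ a b, J a b = (c*γ b - lam*k*m a)/(D a b)) :
    Filter.Tendsto γ Filter.atTop (nhds 0) ∧
    Filter.Tendsto θf Filter.atTop (nhds (1/Φ)) ∧
    ∀ a : ℝ, 0 ≤ a →
      Filter.Tendsto (fun b => J a b) Filter.atTop
        (nhds (-(lam*k*m a)/(q + μ*q/(α*Φ) + lam*Real.exp (-(μ/α)*a)))) ∧
      -(lam*k*m a)/(q + μ*q/(α*Φ) + lam*Real.exp (-(μ/α)*a)) ≤ 0 := by
  have hρΦ : ρ < Φ := hρneg.trans hΦpos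
  have hγlim : Tendsto γ atTop (𝓝 0) := by
    rw [funext hγ]
    exact tendsto_const_nhds.div_atTop (tendsto_mul_exp_sub_mul_exp_atTop hΦpos hρΦ)
  have hθlim : Tendsto θf atTop (𝓝 (1 / Φ)) := by
    simpa only [← funext hθf, one_mul] using
      tendsto_mul_exp_sub_mul_exp_div hρΦ 1 1 Φ ρ hΦpos.ne'
  refine ⟨hγlim, hθlim, fun a _ => ?_⟩
  have hm0 : 0 ≤ m a := by
    rw [hm, neg_mul]
    exact div_nonneg (sub_nonneg.2 (exp_neg_mul_add_one_le_one _)) (by positivity)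
  have hL : 0 < q + μ*q/(α*Φ) + lam*exp (-(μ/α)*a) := by positivity
  have hDlim : Tendsto (fun b => D a b) atTop (𝓝 (q + μ*q/(α*Φ) + lam*exp (-(μ/α)*a))) := by
    convert ((hθlim.const_mul ((μ/α)*q)).const_add q).add_const (lam*exp (-(μ/α)*a)) using 2
    · exact hD a _
    · field_simp
  refine ⟨?_, div_nonpos_of_nonpos_of_nonneg (neg_nonpos.2 (by positivity)) hL.le⟩
  simpa only [hJ, mul_zero, zero_sub, Pi.div_def] using
    ((hγlim.const_mul c).sub_const (lam*k*m a)).div hDlim hL.ne'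

theorem stmt14 (c α lam q μ k : ℝ)
    (hc : 0 < c) (hα0 : 0 < α) (hα1 : α ≤ 1)
    (hlam : 0 < lam) (hq : 0 < q) (hμ : 0 < μ) (hk : 1 ≤ k)
    (Δ Φ ρ : ℝ)
    (hΔ : Δ = (c*μ - α*lam - α*q)^2 + 4*α*c*μ*q)
    (hΦ : Φ = (-(c*μ - α*lam - α*q) + Real.sqrt Δ) / (2*α*c))
    (hρ : ρ = (-(c*μ - α*lam - α*q) - Real.sqrt Δ) / (2*α*c))
    (hΦpos : 0 < Φ) (hρneg : ρ < 0)
    (γ θf m : ℝ → ℝ) (D J ψ : ℝ → ℝ → ℝ)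
    (hγ : ∀ b, γ b = (Φ - ρ)/(Φ*Real.exp (Φ*b) - ρ*Real.exp (ρ*b)))
    (hθf : ∀ b, θf b = (Real.exp (Φ*b) - Real.exp (ρ*b))/(Φ*Real.exp (Φ*b) - ρ*Real.exp (ρ*b)))
    (hm : ∀ a, m a = (1 - Real.exp (-(μ/α)*a)*((μ/α)*a + 1))/(μ/α))
    (hD : ∀ a b, D a b = q + (μ/α)*q*θf b + lam*Real.exp (-(μ/α)*a))
    (hJ : ∀ a b, J a b = (c*γ b - lam*k*m a)/(D a b))
    (hψ : ∀ a b, ψ a b = -(a*k*(q + q*(μ/α)*θf b)) + c*γ b + lam*k*(Real.exp (-(μ/α)*a) - 1)/(μ/α)) :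
    Filter.Tendsto γ Filter.atTop (nhds 0) ∧
    Filter.Tendsto θf Filter.atTop (nhds (1/Φ)) ∧
    ∀ a : ℝ, 0 ≤ a →
      Filter.Tendsto (fun b => J a b) Filter.atTop
        (nhds (-(lam*k*m a)/(q + μ*q/(α*Φ) + lam*Real.exp (-(μ/α)*a)))) ∧
      -(lam*k*m a)/(q + μ*q/(α*Φ) + lam*Real.exp (-(μ/α)*a)) ≤ 0 :=
  stmt14_general c α lam q μ k hα0 hlam hq hμ hk Φ ρ hΦpos hρneg γ θf m D J hγ hθf hm hD hJ
end

section
/- Fix b ≥ 0 and suppose a* > 0 satisfies ∂J/∂a(a*,b) = 0 (equivalently ψ(a*,b) = 0, where ψ(a,b) = −a·k·(q + q·μ_α·θ(b)) + c·γ(b) + λk·(e^{−μ_α a} − 1)/μ_α). Then ∂²J/∂a²(a*,b) = λ·μ_α·e^{−μ_α a*}·(∂ψ/∂a)(a*,b)/D(a*,b)², where (∂ψ/∂a)(a,b) = −k(q + q·μ_α·θ(b)) − λk·e^{−μ_α a}; in particular ∂²J/∂a²(a*,b) < 0, so every critical point of a ↦ J(a,b) is a strict local maximum. -/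
/-!
With `s = μ/α`, `T = q + s q θ(b)` and `C = c γ(b)`, the map `a ↦ J(a,b)` is
`(C - λ k m(a)) / (T + λ e^{-s a})`, and the quotient rule (using `m'(a) = s a e^{-s a}`)
collapses to `J'(a) = w(a) ψ(a)` with the positive weight `w(a) = λ s e^{-s a} / D(a)²`.
Since `ψ'(a) = -k D(a) < 0`, `ψ` is strictly decreasing, so at a zero `a*` of `ψ` the function
`J` increases before `a*` and decreases after it, and `J''(a*) = w(a*) ψ'(a*)` because the term
`w'(a*) ψ(a*)` vanishes.
-/

open Real Set

section CriticalPoint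

variable {f w ψ : ℝ → ℝ} {x₀ : ℝ}

theorem deriv_deriv_eq_of_hasDerivAt_mul_of_eq_zero {ψ' : ℝ}
    (hf : ∀ x, HasDerivAt f (w x * ψ x) x) (hw : DifferentiableAt ℝ w x₀)
    (hψ : HasDerivAt ψ ψ' x₀) (hψ₀ : ψ x₀ = 0) :
    deriv (deriv f) x₀ = w x₀ * ψ' := by
  rw [funext fun x => (hf x).deriv, (hw.hasDerivAt.fun_mul hψ).deriv, hψ₀]
  ring

theorem lt_of_hasDerivAt_pos_mul_of_strictAnti (hf : ∀ x, HasDerivAt f (w x * ψ x) x)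
    (hw : ∀ x, 0 < w x) (hψ : StrictAnti ψ) (hψ₀ : ψ x₀ = 0) {x : ℝ} (hx : x ≠ x₀) :
    f x < f x₀ := by
  have hcont : ContinuousOn f univ := fun y _ => (hf y).continuousAt.continuousWithinAt
  rcases hx.lt_or_gt with h | h
  · refine strictMonoOn_of_deriv_pos (convex_Iic x₀) (hcont.mono (subset_univ _))
      (fun y hy => ?_) h.le self_mem_Iic h
    rw [interior_Iic] at hy
    rw [(hf y).deriv]
    exact mul_pos (hw y) (hψ₀ ▸ hψ hy)
  · refine strictAntiOn_of_deriv_neg (convex_Ici x₀) (hcont.mono (subset_univ _))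
      (fun y hy => ?_) self_mem_Ici h.le h
    rw [interior_Ici] at hy
    rw [(hf y).deriv]
    exact mul_neg_of_pos_of_neg (hw y) (hψ₀ ▸ hψ hy)

end CriticalPoint

theorem exp_sub_exp_div_nonneg {Φ ρ b : ℝ} (hΦ : 0 ≤ Φ) (hρ : ρ ≤ 0) (hb : 0 ≤ b) :
    0 ≤ (exp (Φ*b) - exp (ρ*b)) / (Φ*exp (Φ*b) - ρ*exp (ρ*b)) := by
  have hexp : exp (ρ*b) ≤ exp (Φ*b) := exp_le_exp.2 (by nlinarith)
  apply div_nonneg (sub_nonneg.2 hexp)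
  nlinarith [exp_pos (Φ*b), exp_pos (ρ*b)]

theorem hasDerivAt_exp_neg_mul (s a : ℝ) :
    HasDerivAt (fun x => exp (-s*x)) (-s * exp (-s*a)) a := by
  simpa [mul_comm] using ((hasDerivAt_id a).const_mul (-s)).exp

noncomputable section

namespace ExpClaims

variable (s T L k C : ℝ)

/-- `∫₀^a x · s e^{-s x} dx`: the part of the mean of an `Exp(s)` claim coming from claims
at most `a`. -/
def truncMean (a : ℝ) : ℝ := (1 - exp (-s*a)*(s*a + 1))/s

def value (a : ℝ) : ℝ := (C - L*k*truncMean s a) / (T + L*exp (-s*a))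

def weight (a : ℝ) : ℝ := L*s*exp (-s*a) / (T + L*exp (-s*a))^2

def psi (a : ℝ) : ℝ := -(a*k*T) + C + L*k*(exp (-s*a) - 1)/s

variable {s T L k C}

theorem hasDerivAt_truncMean (hs : s ≠ 0) (a : ℝ) :
    HasDerivAt (truncMean s) (s*a*exp (-s*a)) a := by
  have h := ((hasDerivAt_const a 1).sub ((hasDerivAt_exp_neg_mul s a).mul
    (((hasDerivAt_id' a).const_mul s).add_const 1))).div_const s
  refine h.congr_deriv ?_
  field_simp
  ring

theorem hasDerivAt_psi (hs : s ≠ 0) (a : ℝ) :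
    HasDerivAt (psi s T L k C) (-(k*(T + L*exp (-s*a)))) a := by
  have h := ((((hasDerivAt_id' a).mul_const k).mul_const T).neg.add_const C).add
    ((((hasDerivAt_exp_neg_mul s a).sub_const 1).const_mul (L*k)).div_const s)
  refine h.congr_deriv ?_
  field_simp
  ring

theorem hasDerivAt_value (hs : s ≠ 0) {a : ℝ} (hD : T + L*exp (-s*a) ≠ 0) :
    HasDerivAt (value s T L k C) (weight s T L a * psi s T L k C a) a := by
  have h := (((hasDerivAt_truncMean hs a).const_mul (L*k)).const_sub C).div
    (((hasDerivAt_exp_neg_mul s a).const_mul L).const_add T) hD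
  refine h.congr_deriv ?_
  simp only [weight, psi, truncMean]
  field_simp
  ring

theorem weight_pos {a : ℝ} (hs : 0 < s) (hL : 0 < L) (hD : 0 < T + L*exp (-s*a)) :
    0 < weight s T L a := by
  unfold weight
  positivity

theorem differentiableAt_weight {a : ℝ} (hD : T + L*exp (-s*a) ≠ 0) :
    DifferentiableAt ℝ (weight s T L) a := by
  unfold weight
  fun_prop (disch := exact pow_ne_zero 2 hD)

theorem psi_strictAnti (hs : s ≠ 0) (hk : 0 < k) (hT : 0 < T) (hL : 0 ≤ L) :
    StrictAnti (psi s T L k C) :=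
  strictAnti_of_hasDerivAt_neg (hasDerivAt_psi hs) fun a =>
    neg_neg_of_pos (mul_pos hk (by positivity))

end ExpClaims

end

open ExpClaims in
theorem stmt17_general (c α lam q μ k : ℝ)
    (hα0 : 0 < α)
    (hlam : 0 < lam) (hq : 0 < q) (hμ : 0 < μ) (hk : 1 ≤ k)
    (Φ ρ : ℝ)
    (hΦpos : 0 < Φ) (hρneg : ρ < 0)
    (γ θf m : ℝ → ℝ) (D J : ℝ → ℝ → ℝ)
    (hθf : ∀ b, θf b = (Real.exp (Φ*b) - Real.exp (ρ*b))/(Φ*Real.exp (Φ*b) - ρ*Real.exp (ρ*b)))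
    (hm : ∀ a, m a = (1 - Real.exp (-(μ/α)*a)*((μ/α)*a + 1))/(μ/α))
    (hD : ∀ a b, D a b = q + (μ/α)*q*θf b + lam*Real.exp (-(μ/α)*a))
    (hJ : ∀ a b, J a b = (c*γ b - lam*k*m a)/(D a b)) :
    ∀ b : ℝ, 0 ≤ b → ∀ astar : ℝ, 0 < astar →
      deriv (fun a => J a b) astar = 0 →
      deriv (fun a => deriv (fun a' => J a' b) a) astar
          = lam * (μ/α) * Real.exp (-(μ/α)*astar)
            * (-(k*(q + q*(μ/α)*θf b)) - lam*k*Real.exp (-(μ/α)*astar)) / (D astar b)^2 ∧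
      deriv (fun a => deriv (fun a' => J a' b) a) astar < 0 ∧
      ∀ᶠ a in nhdsWithin astar {astar}ᶜ, J a b < J astar b := by
  intro b hb a₀ _ hcrit
  set s := μ/α
  set T := q + s*q*θf b
  have hs : 0 < s := div_pos hμ hα0
  have hT : 0 < T := by
    have := exp_sub_exp_div_nonneg hΦpos.le hρneg.le hb
    rw [← hθf] at this
    positivity
  have hDpos (a : ℝ) : 0 < T + lam*exp (-s*a) := by positivity
  have hJ' (a : ℝ) : J a b = value s T lam k (c*γ b) a := by rw [hJ, hD, hm]; rfl
  have hderiv (a : ℝ) := hasDerivAt_value (C := c*γ b) (k := k) hs.ne' (hDpos a).ne'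
  have hψ₀ : psi s T lam k (c*γ b) a₀ = 0 := by
    rw [funext hJ', (hderiv a₀).deriv] at hcrit
    exact (mul_eq_zero.1 hcrit).resolve_left (weight_pos hs hlam (hDpos a₀)).ne'
  have hsecond : deriv (deriv (value s T lam k (c*γ b))) a₀
      = weight s T lam a₀ * -(k*(T + lam*exp (-s*a₀))) :=
    deriv_deriv_eq_of_hasDerivAt_mul_of_eq_zero hderiv
      (differentiableAt_weight (hDpos a₀).ne') (hasDerivAt_psi hs.ne' a₀) hψ₀
  rw [funext hJ', hsecond, hD]
  refine ⟨by unfold weight; ring, ?_, ?_⟩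
  · exact mul_neg_of_pos_of_neg (weight_pos hs hlam (hDpos a₀))
      (neg_neg_of_pos (mul_pos (by linarith) (hDpos a₀)))
  · simp only [hJ']
    exact eventually_nhdsWithin_of_forall fun a ha =>
      lt_of_hasDerivAt_pos_mul_of_strictAnti hderiv (fun x => weight_pos hs hlam (hDpos x))
        (psi_strictAnti hs.ne' (by linarith) hT hlam.le) hψ₀ ha

theorem stmt17 (c α lam q μ k : ℝ)
    (hc : 0 < c) (hα0 : 0 < α) (hα1 : α ≤ 1)
    (hlam : 0 < lam) (hq : 0 < q) (hμ : 0 < μ) (hk : 1 ≤ k)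
    (Δ Φ ρ : ℝ)
    (hΔ : Δ = (c*μ - α*lam - α*q)^2 + 4*α*c*μ*q)
    (hΦ : Φ = (-(c*μ - α*lam - α*q) + Real.sqrt Δ) / (2*α*c))
    (hρ : ρ = (-(c*μ - α*lam - α*q) - Real.sqrt Δ) / (2*α*c))
    (hΦpos : 0 < Φ) (hρneg : ρ < 0)
    (γ θf m : ℝ → ℝ) (D J ψ : ℝ → ℝ → ℝ)
    (hγ : ∀ b, γ b = (Φ - ρ)/(Φ*Real.exp (Φ*b) - ρ*Real.exp (ρ*b)))
    (hθf : ∀ b, θf b = (Real.exp (Φ*b) - Real.exp (ρ*b))/(Φ*Real.exp (Φ*b) - ρ*Real.exp (ρ*b)))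
    (hm : ∀ a, m a = (1 - Real.exp (-(μ/α)*a)*((μ/α)*a + 1))/(μ/α))
    (hD : ∀ a b, D a b = q + (μ/α)*q*θf b + lam*Real.exp (-(μ/α)*a))
    (hJ : ∀ a b, J a b = (c*γ b - lam*k*m a)/(D a b))
    (hψ : ∀ a b, ψ a b = -(a*k*(q + q*(μ/α)*θf b)) + c*γ b + lam*k*(Real.exp (-(μ/α)*a) - 1)/(μ/α)) :
    ∀ b : ℝ, 0 ≤ b → ∀ astar : ℝ, 0 < astar →
      deriv (fun a => J a b) astar = 0 →
      deriv (fun a => deriv (fun a' => J a' b) a) astar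
          = lam * (μ/α) * Real.exp (-(μ/α)*astar)
            * (-(k*(q + q*(μ/α)*θf b)) - lam*k*Real.exp (-(μ/α)*astar)) / (D astar b)^2 ∧
      deriv (fun a => deriv (fun a' => J a' b) a) astar < 0 ∧
      ∀ᶠ a in nhdsWithin astar {astar}ᶜ, J a b < J astar b :=
  stmt17_general c α lam q μ k hα0 hlam hq hμ hk Φ ρ hΦpos hρneg γ θf m D J hθf hm hD hJ
end
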